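/- arXiv:2109.08340 — 5 statements merged into one kernel-verified Lean document; each statement's English description precedes it below -/
import Mathlib

section
/- Let S = (U, F) be a finite undirected graph on q nodes with incidence matrix columns z_j ∈ ℝ^q (z_j = e_i for a self-loop at u_i, z_j = (e_k+e_ℓ)/2 for an edge between distinct u_k, u_ℓ). If f_i is an edge between distinct nodes u_k, u_ℓ such that not both endpoints carry self-loops, then z_i is an extremal point of the edge polytope X(S). -/
/-- The halved incidence vector of the edge (k, ℓ): `e k` when `k = ℓ` (self-loop),
`(e k + e ℓ)/2` when `k ≠ ℓ`. -/
noncomputable def incVec {q : ℕ} (k ℓ : Fin q) : Fin q → ℝ :=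
  (1 / 2 : ℝ) • (Pi.single k 1 + Pi.single ℓ 1)

/-- The edge polytope `X(S)`. -/
noncomputable def edgePolytope {q : ℕ} (F : Fin q → Fin q → Prop) : Set (Fin q → ℝ) :=
  convexHull ℝ {x | ∃ k ℓ, F k ℓ ∧ x = incVec k ℓ}

/-!
By symmetry the endpoint `ℓ` carries no self-loop; weigh points by `λ(y) = y k + 2 y ℓ`.
A generator `incVec a b` has `λ = (w a + w b) / 2` with `w a ∈ {0, 1, 2}` and `w a = 2` only
for `a = ℓ`; as there is no loop at `ℓ`, the generators other than `incVec k ℓ` have `λ < 3/2`,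
while `λ (incVec k ℓ) = 3/2`. A point that is the unique maximiser of a linear functional on the
generators is its unique maximiser on their convex hull, hence an extreme point of it.
-/

section LinearMax

variable {E : Type*} [AddCommGroup E] [Module ℝ E]

theorem convex_setOf_ne_imp_apply_lt (l : E →ₗ[ℝ] ℝ) (x : E) :
    Convex ℝ {y | y ≠ x → l y < l x} := by
  have hle : ∀ y, (y ≠ x → l y < l x) → l y ≤ l x := fun y hy => by
    rcases eq_or_ne y x with h | h
    · rw [h]
    · exact (hy h).le
  intro y hy z hz a b ha hb hab hne
  simp only [map_add, map_smul, smul_eq_mul]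
  rcases ha.eq_or_lt with rfl | ha0
  · obtain rfl : b = 1 := by linarith
    simp only [zero_smul, one_smul, zero_add] at hne
    simpa using hz hne
  rcases hb.eq_or_lt with rfl | hb0
  · obtain rfl : a = 1 := by linarith
    simp only [zero_smul, one_smul, add_zero] at hne
    simpa using hy hne
  have hsplit : a * l x + b * l x = l x := by rw [← add_mul, hab, one_mul]
  by_cases hyx : y = x
  · have hzx : z ≠ x := by
      rintro rfl
      exact hne (by rw [hyx, Convex.combo_self hab])
    linarith [mul_lt_mul_of_pos_left (hz hzx) hb0, mul_le_mul_of_nonneg_left (hle y hy) ha]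
  · linarith [mul_lt_mul_of_pos_left (hy hyx) ha0, mul_le_mul_of_nonneg_left (hle z hz) hb]

theorem apply_lt_of_mem_convexHull_of_ne (l : E →ₗ[ℝ] ℝ) {s : Set E} {x y : E}
    (hs : ∀ z ∈ s, z ≠ x → l z < l x) (hy : y ∈ convexHull ℝ s) (hne : y ≠ x) : l y < l x :=
  convexHull_min hs (convex_setOf_ne_imp_apply_lt l x) hy hne

theorem mem_extremePoints_convexHull_of_forall_ne_imp_apply_lt (l : E →ₗ[ℝ] ℝ) {s : Set E}
    {x : E} (hx : x ∈ s) (hs : ∀ z ∈ s, z ≠ x → l z < l x) :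
    x ∈ (convexHull ℝ s).extremePoints ℝ := by
  have hsdiff : convexHull ℝ s \ {x} = convexHull ℝ s ∩ {y | l y < l x} := by
    ext y
    exact and_congr_right fun hy =>
      ⟨apply_lt_of_mem_convexHull_of_ne l hs hy, fun hlt hyx => hlt.ne (congrArg l hyx)⟩
  rw [(convex_convexHull ℝ s).mem_extremePoints_iff_convex_sdiff, hsdiff]
  exact ⟨subset_convexHull ℝ s hx,
    (convex_convexHull ℝ s).inter (convex_halfSpace_lt l.isLinear _)⟩

end LinearMax

theorem incVec_comm {q : ℕ} (k ℓ : Fin q) : incVec k ℓ = incVec ℓ k := by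
  simp only [incVec, add_comm]

theorem apply_incVec {q : ℕ} (l : (Fin q → ℝ) →ₗ[ℝ] ℝ) (a b : Fin q) :
    l (incVec a b) = (l (Pi.single a 1) + l (Pi.single b 1)) / 2 := by
  rw [incVec, map_smul, map_add, smul_eq_mul]
  ring

noncomputable def exposingFunctional {q : ℕ} (k ℓ : Fin q) : (Fin q → ℝ) →ₗ[ℝ] ℝ :=
  LinearMap.proj k + (2 : ℝ) • LinearMap.proj ℓ

theorem exposingFunctional_incVec {q : ℕ} (k ℓ a b : Fin q) :
    exposingFunctional k ℓ (incVec a b) =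
      ((if k = a then 1 else 0) + 2 * (if ℓ = a then 1 else 0) +
        (if k = b then 1 else 0) + 2 * (if ℓ = b then 1 else 0)) / 2 := by
  simp only [apply_incVec, exposingFunctional, LinearMap.add_apply, LinearMap.smul_apply,
    LinearMap.coe_proj, Function.eval, Pi.single_apply, smul_eq_mul]
  ring

theorem exposingFunctional_incVec_lt {q : ℕ} {k ℓ a b : Fin q} (hkl : k ≠ ℓ)
    (hloop : ¬ (a = ℓ ∧ b = ℓ)) (hkℓ : ¬ (a = k ∧ b = ℓ)) (hℓk : ¬ (a = ℓ ∧ b = k)) :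
    exposingFunctional k ℓ (incVec a b) < exposingFunctional k ℓ (incVec k ℓ) := by
  simp only [exposingFunctional_incVec, if_neg hkl, if_neg hkl.symm]
  split_ifs <;> simp_all <;> norm_num

theorem incVec_mem_extremePoints_of_not_loop {q : ℕ} {F : Fin q → Fin q → Prop} {k ℓ : Fin q}
    (hkl : k ≠ ℓ) (hedge : F k ℓ) (hℓ : ¬ F ℓ ℓ) :
    incVec k ℓ ∈ Set.extremePoints ℝ (edgePolytope F) := by
  have hgen : ∀ z ∈ {x | ∃ a b, F a b ∧ x = incVec a b}, z ≠ incVec k ℓ →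
      exposingFunctional k ℓ z < exposingFunctional k ℓ (incVec k ℓ) := by
    rintro _ ⟨a, b, hab, rfl⟩ hne
    refine exposingFunctional_incVec_lt hkl ?_ ?_ ?_
    · rintro ⟨rfl, rfl⟩
      exact hℓ hab
    · rintro ⟨rfl, rfl⟩
      exact hne rfl
    · rintro ⟨rfl, rfl⟩
      exact hne (incVec_comm _ _)
  exact mem_extremePoints_convexHull_of_forall_ne_imp_apply_lt _ ⟨k, ℓ, hedge, rfl⟩ hgen

/-- if the edge `(k, ℓ)` joins two distinct nodes and it is not the case
that both endpoints carry self-loops, then its generator is an extremal point of the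
edge polytope. -/
theorem edge_not_between_selfLoops_extreme {q : ℕ} (F : Fin q → Fin q → Prop)
    (Fsymm : ∀ k ℓ, F k ℓ → F ℓ k) (k ℓ : Fin q) (hkl : k ≠ ℓ) (hedge : F k ℓ)
    (hnot : ¬ (F k k ∧ F ℓ ℓ)) :
    incVec k ℓ ∈ Set.extremePoints ℝ (edgePolytope F) := by
  rcases not_and_or.mp hnot with hk | hℓ
  · rw [incVec_comm]
    exact incVec_mem_extremePoints_of_not_loop hkl.symm (Fsymm k ℓ hedge) hk
  · exact incVec_mem_extremePoints_of_not_loop hkl hedge hℓ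
end

section
/- Let S be a connected finite undirected graph on q nodes, possibly with self-loops. If S contains an odd cycle (where a self-loop counts as an odd cycle), then the affine dimension (rank) of its edge polytope X(S) is q − 1; otherwise (S bipartite with no self-loops) the rank of X(S) is q − 2. -/
/-- `S` is connected: any two nodes are joined by a walk. -/
def GraphConnected {q : ℕ} (F : Fin q → Fin q → Prop) : Prop :=
  ∀ i j : Fin q, Relation.ReflTransGen F i j

/-- `S` has an odd cycle (a self-loop counts as an odd cycle); for a connected graph
this is equivalent to `S` not being 2-colorable (not bipartite, no self-loops). -/
def HasOddCycle {q : ℕ} (F : Fin q → Fin q → Prop) : Prop :=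
  ¬ ∃ c : Fin q → Bool, ∀ i j, F i j → c i ≠ c j

open Module Submodule

-- For empty `s` both sides are `0`, thanks to truncated subtraction.
theorem finrank_vectorSpan_eq_finrank_span_sub_one {K V : Type*} [Field K] [AddCommGroup V]
    [Module K V] [FiniteDimensional K V] {s : Set V} (f : V →ₗ[K] K)
    (hf : ∀ x ∈ s, f x = 1) :
    finrank K (vectorSpan K s) = finrank K (span K s) - 1 := by
  rcases s.eq_empty_or_nonempty with rfl | ⟨p, hp⟩
  · rw [vectorSpan_empty, span_empty, finrank_bot]
  have hV : vectorSpan K s ≤ LinearMap.ker f := by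
    rw [vectorSpan_def, span_le]
    rintro _ ⟨x, hx, y, hy, rfl⟩
    simp [hf x hx, hf y hy]
  have hsup : span K s = (K ∙ p) ⊔ vectorSpan K s := by
    refine le_antisymm (span_le.2 fun x hx => ?_) (sup_le ?_ ?_)
    · rw [← sub_add_cancel x p, add_comm]
      exact add_mem (mem_sup_left (mem_span_singleton_self p))
        (mem_sup_right (vsub_mem_vectorSpan K hx hp))
    · exact (span_singleton_le_iff_mem _ _).2 (subset_span hp)
    · rw [vectorSpan_def, span_le]
      rintro _ ⟨x, hx, y, hy, rfl⟩
      exact sub_mem (subset_span hx) (subset_span hy)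
  have hinf : (K ∙ p) ⊓ vectorSpan K s = ⊥ := by
    rw [eq_bot_iff]
    rintro _ ⟨hx, hxV⟩
    obtain ⟨c, rfl⟩ := mem_span_singleton.1 hx
    have := hV hxV
    simp_all
  have hp0 : p ≠ 0 := by rintro rfl; simpa using hf 0 hp
  have := finrank_sup_add_finrank_inf_eq (K ∙ p) (vectorSpan K s)
  rw [hinf, finrank_bot, finrank_span_singleton hp0, ← hsup] at this
  omega

section

variable {q : ℕ} {F : Fin q → Fin q → Prop}

theorem HasOddCycle.eq_zero_of_forall_add_eq_zero {R : Type*} [CommRing R] [LinearOrder R]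
    [IsStrictOrderedRing R] (hodd : HasOddCycle F) (hconn : GraphConnected F)
    {s : Fin q → R} (hs : ∀ k ℓ, F k ℓ → s k + s ℓ = 0) : s = 0 := by
  have habs : ∀ i j, |s i| = |s j| := fun i j => by
    induction hconn i j with
    | refl => rfl
    | tail _ hF ih => rw [ih, eq_neg_of_add_eq_zero_right (hs _ _ hF), abs_neg]
  by_contra hs0
  obtain ⟨i, hi⟩ := Function.ne_iff.1 hs0
  have hne : ∀ j, s j ≠ 0 := fun j h => hi (abs_eq_zero.1 (by rw [habs i j, h, abs_zero]))
  refine hodd ⟨fun j => decide (0 < s j), fun k ℓ hF hc => ?_⟩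
  have hkℓ := hs k ℓ hF
  simp only [decide_eq_decide] at hc
  rcases (hne k).lt_or_gt with h | h
  · linarith [hc.2 (by linarith)]
  · linarith [hc.1 h]

theorem linearCombination_incVec (w : Fin q → ℝ) (k ℓ : Fin q) :
    Fintype.linearCombination ℝ w (incVec k ℓ) = (w k + w ℓ) / 2 := by
  simp only [incVec, map_smul, map_add, Fintype.linearCombination_apply_single, smul_eq_mul,
    one_mul]
  ring

def edgeVectors (F : Fin q → Fin q → Prop) : Set (Fin q → ℝ) :=
  {x | ∃ k ℓ, F k ℓ ∧ x = incVec k ℓ}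

theorem vectorSpan_edgePolytope :
    vectorSpan ℝ (edgePolytope F) = vectorSpan ℝ (edgeVectors F) := by
  rw [edgePolytope, ← direction_affineSpan, affineSpan_convexHull, direction_affineSpan]
  rfl

theorem eq_top_of_edgeVectors_subset_of_single_mem {U : Submodule ℝ (Fin q → ℝ)}
    (hU : edgeVectors F ⊆ U) (hconn : GraphConnected F) {z : Fin q}
    (hz : Pi.single z 1 ∈ U) : U = ⊤ := by
  have hmem : ∀ j, Pi.single j (1 : ℝ) ∈ U := fun j => by
    induction hconn z j with
    | refl => exact hz
    | tail _ hF ih =>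
      convert sub_mem (smul_mem U 2 (hU ⟨_, _, hF, rfl⟩)) ih using 1
      rw [incVec, smul_smul]
      norm_num
  rw [eq_top_iff, ← (Pi.basisFun ℝ (Fin q)).span_eq, span_le]
  rintro _ ⟨j, rfl⟩
  simpa using hmem j

theorem span_edgeVectors_eq_top (hodd : HasOddCycle F) (hconn : GraphConnected F) :
    span ℝ (edgeVectors F) = ⊤ := by
  by_contra h
  obtain ⟨φ, hφ, hle⟩ := exists_le_ker_of_lt_top _ (lt_top_iff_ne_top.2 h)
  have hs := hodd.eq_zero_of_forall_add_eq_zero hconn (s := fun i => φ (Pi.single i 1))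
    fun k ℓ hF => by
      have := hle (subset_span ⟨k, ℓ, hF, rfl⟩)
      simp only [LinearMap.mem_ker, incVec, map_smul, map_add, smul_eq_mul] at this
      linarith
  exact hφ ((Pi.basisFun ℝ (Fin q)).ext fun i => by simpa using congrFun hs i)

theorem single_notMem_span_edgeVectors {c : Fin q → Bool} (hc : ∀ i j, F i j → c i ≠ c j)
    (z : Fin q) : Pi.single z 1 ∉ span ℝ (edgeVectors F) := by
  let τ := Fintype.linearCombination ℝ fun i => if c i then (1 : ℝ) else -1
  have hle : span ℝ (edgeVectors F) ≤ LinearMap.ker τ := span_le.2 <| by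
    rintro _ ⟨k, ℓ, hF, rfl⟩
    have := hc k ℓ hF
    cases hk : c k <;> cases hℓ : c ℓ <;> simp_all [τ, linearCombination_incVec]
  intro hz
  have := hle hz
  cases hz : c z <;> simp_all [τ, Fintype.linearCombination_apply_single]

theorem finrank_span_edgeVectors_of_coloring {c : Fin q → Bool}
    (hc : ∀ i j, F i j → c i ≠ c j) (hconn : GraphConnected F) :
    finrank ℝ (span ℝ (edgeVectors F)) = q - 1 := by
  rcases Nat.eq_zero_or_pos q with rfl | hq
  · simp
  obtain ⟨z⟩ : Nonempty (Fin q) := ⟨⟨0, hq⟩⟩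
  have hlt : finrank ℝ (span ℝ (edgeVectors F)) < q := by
    simpa using finrank_lt (s := span ℝ (edgeVectors F))
      fun h => single_notMem_span_edgeVectors hc z (h ▸ mem_top)
  have hsup : span ℝ (edgeVectors F) ⊔ (ℝ ∙ Pi.single z 1) = ⊤ :=
    eq_top_of_edgeVectors_subset_of_single_mem (fun x hx => mem_sup_left (subset_span hx))
      hconn (mem_sup_right (mem_span_singleton_self _))
  have hle := finrank_add_le_finrank_add_finrank (span ℝ (edgeVectors F)) (ℝ ∙ Pi.single z 1)
  rw [hsup, finrank_top, finrank_fin_fun, finrank_span_singleton (by simp)] at hle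
  omega

end

open Classical in
theorem edgePolytope_rank_general {q : ℕ} (F : Fin q → Fin q → Prop)
    (hconn : GraphConnected F) :
    Module.finrank ℝ (vectorSpan ℝ (edgePolytope F)) =
      if HasOddCycle F then q - 1 else q - 2 := by
  have hsum : ∀ x ∈ edgeVectors F, Fintype.linearCombination ℝ (fun _ => (1 : ℝ)) x = 1 := by
    rintro _ ⟨k, ℓ, -, rfl⟩
    norm_num [linearCombination_incVec]
  rw [vectorSpan_edgePolytope, finrank_vectorSpan_eq_finrank_span_sub_one _ hsum]
  split_ifs with hodd
  · rw [span_edgeVectors_eq_top hodd hconn, finrank_top, finrank_fin_fun]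
  · obtain ⟨c, hc⟩ := not_not.1 hodd
    rw [finrank_span_edgeVectors_of_coloring hc hconn]
    omega

open Classical in
/-- for a connected graph `S` on `q` nodes, possibly with self-loops,
the affine dimension (rank) of the edge polytope `X(S)` is `q - 1` if `S` has an odd
cycle and `q - 2` otherwise. -/
theorem edgePolytope_rank {q : ℕ} (F : Fin q → Fin q → Prop)
    (Fsymm : ∀ k ℓ, F k ℓ → F ℓ k) (hconn : GraphConnected F) :
    Module.finrank ℝ (vectorSpan ℝ (edgePolytope F)) =
      if HasOddCycle F then q - 1 else q - 2 :=
  edgePolytope_rank_general F hconn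
end

section
/- Let S = (U,F) be a finite undirected graph on q nodes, possibly with self-loops. Then the edge polytope X(S) equals the set of row-sum vectors {A·1 : A ∈ A(S)}, where A(S) is the set of q×q nonnegative matrices supported on F with A·1 = Aᵀ·1 and total sum of entries equal to 1. -/
open Matrix

def matSet {q : ℕ} (F : Fin q → Fin q → Prop) : Set (Matrix (Fin q) (Fin q) ℝ) :=
  {A | (∀ i j, 0 ≤ A i j) ∧ (∀ i j, ¬ F i j → A i j = 0) ∧
    A *ᵥ (fun _ => 1) = Aᵀ *ᵥ (fun _ => 1) ∧ ∑ i, ∑ j, A i j = 1}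

/-! A matrix `A ∈ A(S)` has row sums `A·1 = (A·1 + Aᵀ·1) / 2 = ∑ a_ij z_ij`, a convex combination
of incidence vectors with weights `a_ij`, which vanish off `F`. Conversely, `{A·1 : A ∈ A(S)}` is
the linear image of the convex set `A(S)`, and for an edge `(u_k, u_ℓ)` it contains `z_kℓ` as the
row sums of the symmetric matrix `(E_kℓ + E_ℓk) / 2`, which lies in `A(S)` because `F` is
symmetric. -/

open Finset

variable {q : ℕ}

lemma sum_smul_incVec (A : Matrix (Fin q) (Fin q) ℝ) :
    ∑ i, ∑ j, A i j • incVec i j = (1 / 2 : ℝ) • (A *ᵥ (fun _ => 1) + Aᵀ *ᵥ (fun _ => 1)) := by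
  ext m
  simp [incVec, mulVec, dotProduct, Pi.single_apply, sum_add_distrib, mul_add, mul_sum,
    Finset.sum_apply, mul_comm, sum_mul]

lemma mulVec_one_mem_edgePolytope {F : Fin q → Fin q → Prop} {A : Matrix (Fin q) (Fin q) ℝ}
    (hA : A ∈ matSet F) : A *ᵥ (fun _ => 1) ∈ edgePolytope F := by
  obtain ⟨hA₀, hAF, hAbal, hA₁⟩ := hA
  have hrow : A *ᵥ (fun _ => 1) = ∑ p : Fin q × Fin q, A p.1 p.2 • incVec p.1 p.2 := by
    simp only [Fintype.sum_prod_type]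
    rw [sum_smul_incVec, ← hAbal, ← two_smul ℝ, smul_smul]
    norm_num
  rw [hrow, ← finsum_eq_sum_of_fintype]
  refine (convex_convexHull ℝ _).finsum_mem (fun p => hA₀ p.1 p.2) ?_
    fun p hp => subset_convexHull ℝ _ ⟨p.1, p.2, ?_, rfl⟩
  · rw [finsum_eq_sum_of_fintype, Fintype.sum_prod_type, hA₁]
  · by_contra hF
    exact hp (hAF _ _ hF)

noncomputable def edgeMatrix (k ℓ : Fin q) : Matrix (Fin q) (Fin q) ℝ :=
  (1 / 2 : ℝ) • (single k ℓ 1 + single ℓ k 1)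

lemma edgeMatrix_transpose (k ℓ : Fin q) : (edgeMatrix k ℓ)ᵀ = edgeMatrix k ℓ := by
  simp [edgeMatrix, transpose_single, add_comm]

lemma edgeMatrix_mulVec_one (k ℓ : Fin q) : edgeMatrix k ℓ *ᵥ (fun _ => 1) = incVec k ℓ := by
  simp [edgeMatrix, incVec, add_mulVec, single_mulVec_eq]

lemma edgeMatrix_mem_matSet {F : Fin q → Fin q → Prop} {k ℓ : Fin q} (hkℓ : F k ℓ)
    (hℓk : F ℓ k) : edgeMatrix k ℓ ∈ matSet F := by
  refine ⟨fun i j => ?_, fun i j hij => ?_, by rw [edgeMatrix_transpose], ?_⟩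
  · simp only [edgeMatrix, Matrix.smul_apply, Matrix.add_apply, single_apply, smul_eq_mul]
    positivity
  · have hne : ¬(k = i ∧ ℓ = j) ∧ ¬(ℓ = i ∧ k = j) := by
      constructor <;> rintro ⟨rfl, rfl⟩ <;> contradiction
    simp [edgeMatrix, hne]
  · norm_num [edgeMatrix, sum_add_distrib, ← mul_sum, single_apply, ite_and]

lemma convex_matSet (F : Fin q → Fin q → Prop) : Convex ℝ (matSet F) := by
  rintro A ⟨hA₀, hAF, hAbal, hA₁⟩ B ⟨hB₀, hBF, hBbal, hB₁⟩ a b ha hb hab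
  refine ⟨fun i j => ?_, fun i j hij => ?_, ?_, ?_⟩
  · exact add_nonneg (mul_nonneg ha (hA₀ i j)) (mul_nonneg hb (hB₀ i j))
  · simp [hAF i j hij, hBF i j hij]
  · simp [add_mulVec, smul_mulVec, hAbal, hBbal]
  · simp [sum_add_distrib, ← mul_sum, hA₁, hB₁, hab]

lemma convex_rowSums (F : Fin q → Fin q → Prop) :
    Convex ℝ {x | ∃ A ∈ matSet F, x = A *ᵥ (fun _ => 1)} := by
  rintro _ ⟨A, hA, rfl⟩ _ ⟨B, hB, rfl⟩ a b ha hb hab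
  exact ⟨a • A + b • B, convex_matSet F hA hB ha hb hab, by simp [add_mulVec, smul_mulVec]⟩

/-- the edge polytope `X(S)` equals the set of row-sum vectors
`{A·1 : A ∈ A(S)}`. -/
theorem edgePolytope_eq_rowSums {q : ℕ} (F : Fin q → Fin q → Prop)
    (Fsymm : ∀ k ℓ, F k ℓ → F ℓ k) :
    edgePolytope F = {x | ∃ A ∈ matSet F, x = A *ᵥ (fun _ => 1)} := by
  refine Set.Subset.antisymm (convexHull_min ?_ (convex_rowSums F)) ?_
  · rintro _ ⟨k, ℓ, hF, rfl⟩
    exact ⟨edgeMatrix k ℓ, edgeMatrix_mem_matSet hF (Fsymm k ℓ hF),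
      (edgeMatrix_mulVec_one k ℓ).symm⟩
  · rintro _ ⟨A, hA, rfl⟩
    exact mulVec_one_mem_edgePolytope hA
end

section
/- Let G = (V,E) be a finite undirected graph, S = (U,F) an undirected graph (self-loops allowed), and π : V → U a graph homomorphism. If the empirical concentration vector x (with x_i = |π^{-1}(u_i)|/|V|) does not lie in the edge polytope X(S), then the directed version of G has no Hamiltonian decomposition. -/
/-!
In a Hamiltonian decomposition `H` every vertex is the tail of exactly one arc and the head of
exactly one arc. Each arc `(v, w)` projects along `π` to the vertex `incVec (π v) (π w)` of the
edge polytope, and since tails and heads each run once over all vertices, the average of these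
points over `H` is exactly the concentration vector `x`, so `x ∈ X(S)`.
-/

open Finset

section FiberCardOne

variable {α β : Type*} [Fintype β] [DecidableEq β] (s : Finset α) (f : α → β)

theorem Finset.sum_comp_eq_sum_univ_of_card_fiber_eq_one {M : Type*} [AddCommMonoid M]
    (h : ∀ b, #{a ∈ s | f a = b} = 1) (g : β → M) :
    ∑ a ∈ s, g (f a) = ∑ b, g b := by
  have himage : s.image f = univ :=
    eq_univ_of_forall fun b => by
      obtain ⟨a, ha⟩ := card_pos.1 (h b ▸ Nat.one_pos)
      exact mem_image.2 ⟨a, (mem_filter.1 ha).1, (mem_filter.1 ha).2⟩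
  simp [sum_comp, himage, h]

theorem Finset.card_eq_card_univ_of_card_fiber_eq_one
    (h : ∀ b, #{a ∈ s | f a = b} = 1) : #s = Fintype.card β := by
  simpa using s.sum_comp_eq_sum_univ_of_card_fiber_eq_one f h (fun _ => (1 : ℕ))

end FiberCardOne

theorem sum_pi_single_one_eq_card_fiber {V : Type*} [Fintype V] {q : ℕ} (π : V → Fin q) :
    ∑ v, (Pi.single (π v) 1 : Fin q → ℝ) = fun i => (#{v | π v = i} : ℝ) := by
  funext i
  simp [Finset.sum_apply, Pi.single_apply, eq_comm]

theorem sum_incVec_eq_card_fiber {V : Type*} [Fintype V] [DecidableEq V] {q : ℕ}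
    (π : V → Fin q) (H : Finset (V × V)) (hout : ∀ v, #{e ∈ H | e.1 = v} = 1)
    (hin : ∀ v, #{e ∈ H | e.2 = v} = 1) :
    ∑ e ∈ H, incVec (π e.1) (π e.2) = fun i => (#{v | π v = i} : ℝ) := by
  simp only [incVec, ← smul_sum, sum_add_distrib,
    H.sum_comp_eq_sum_univ_of_card_fiber_eq_one Prod.fst hout (fun v => Pi.single (π v) 1),
    H.sum_comp_eq_sum_univ_of_card_fiber_eq_one Prod.snd hin (fun v => Pi.single (π v) 1),
    sum_pi_single_one_eq_card_fiber]
  funext i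
  simp only [Pi.smul_apply, Pi.add_apply, smul_eq_mul]
  ring

theorem inv_card_smul_sum_incVec_mem_edgePolytope {ι : Type*} {q : ℕ}
    {F : Fin q → Fin q → Prop} (s : Finset ι) (hs : s.Nonempty) (a b : ι → Fin q)
    (hF : ∀ i ∈ s, F (a i) (b i)) :
    (#s : ℝ)⁻¹ • ∑ i ∈ s, incVec (a i) (b i) ∈ edgePolytope F := by
  rw [smul_sum]
  refine (convex_convexHull ℝ _).sum_mem (fun _ _ => by positivity) ?_
    fun i hi => subset_convexHull ℝ _ ⟨a i, b i, hF i hi, rfl⟩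
  simp [(card_pos.2 hs).ne']

theorem no_hamiltonian_decomposition_general {V : Type*} [Fintype V] [DecidableEq V]
    [Nonempty V] {q : ℕ} (G : SimpleGraph V) (F : Fin q → Fin q → Prop)
    (π : V → Fin q)
    (hhom : ∀ v w, G.Adj v w → F (π v) (π w))
    (hx : (fun i => ((univ.filter (fun v => π v = i)).card : ℝ) / Fintype.card V)
        ∉ edgePolytope F) :
    ¬ ∃ H : Finset (V × V), (∀ e ∈ H, G.Adj e.1 e.2) ∧
        (∀ v : V, (H.filter (fun e => e.1 = v)).card = 1) ∧
        (∀ v : V, (H.filter (fun e => e.2 = v)).card = 1) := by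
  rintro ⟨H, hadj, hout, hin⟩
  have hcard : #H = Fintype.card V := H.card_eq_card_univ_of_card_fiber_eq_one Prod.fst hout
  have hH : H.Nonempty := card_pos.1 (hcard ▸ Fintype.card_pos)
  apply hx
  convert inv_card_smul_sum_incVec_mem_edgePolytope H hH _ _ fun e he => hhom _ _ (hadj e he)
    using 1
  rw [sum_incVec_eq_card_fiber π H hout hin, hcard]
  funext i
  simp [div_eq_inv_mul]

/-- let `π` be a graph homomorphism from a finite graph `G` to `S`.
If the empirical concentration vector `x_i = |π⁻¹(u_i)|/|V|` does not lie in the edge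
polytope `X(S)`, then the directed version of `G` has no Hamiltonian decomposition. -/
theorem no_hamiltonian_decomposition {V : Type*} [Fintype V] [DecidableEq V]
    [Nonempty V] {q : ℕ} (G : SimpleGraph V) (F : Fin q → Fin q → Prop)
    (Fsymm : ∀ k ℓ, F k ℓ → F ℓ k) (π : V → Fin q)
    (hhom : ∀ v w, G.Adj v w → F (π v) (π w))
    (hx : (fun i => ((univ.filter (fun v => π v = i)).card : ℝ) / Fintype.card V)
        ∉ edgePolytope F) :
    ¬ ∃ H : Finset (V × V), (∀ e ∈ H, G.Adj e.1 e.2) ∧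
        (∀ v : V, (H.filter (fun e => e.1 = v)).card = 1) ∧
        (∀ v : V, (H.filter (fun e => e.2 = v)).card = 1) :=
  no_hamiltonian_decomposition_general G F π hhom hx
end

section
/- Let q ≥ 1 and let A be a q×q real matrix that is infinitesimally doubly stochastic, i.e., off-diagonal entries nonnegative, A·1 = 0, and Aᵀ·1 = 0. For a directed cycle C = (i_1, …, i_m) of distinct indices, m ≥ 2, let L_C be its Laplacian: (L_C)_{i_k i_{k+1}} = 1 (indices mod m), (L_C)_{i_k i_k} = −1, all other entries 0. Then −diag(L_C) = Σ_{k=1}^m e_{i_k}, and every such A is a nonnegative combination of matrices L_C over directed cycles C. -/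
/-!
The diagonal identity holds term by term, because a cycle has no edge `c k → c k`.

For the decomposition, call `i → j` an edge when `i ≠ j` and `0 < A i j`. A zero column sum
forces `A j j < 0` at the head `j` of an edge, and then the zero row sum gives an edge leaving `j`.
So every edge can be continued, and in the finite index set following edges closes a directed
cycle `C`. Subtracting `ε • L_C`, where `ε` is the least entry of `A` along `C`, keeps `A`
infinitesimally doubly stochastic and kills an off-diagonal entry; induction on the off-diagonal
support puts `A` in the cone generated by the cycle Laplacians.
-/

open Matrix Finset

/-- The Laplacian `L_C` of the directed cycle given by an injective `c : Fin m → Fin q`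
(edges `c k → c (k+1)` cyclically): entry `1` at `(c k, c (k+1))`, entry `−1` at
`(c k, c k)`, all other entries `0`. -/
noncomputable def cycleLap {q m : ℕ} (c : Fin m → Fin q) : Matrix (Fin q) (Fin q) ℝ :=
  ∑ k : Fin m,
    (Matrix.single (c k) (c (finRotate m k)) 1 -
      Matrix.single (c k) (c k) 1)

open Function

theorem Function.periodicPts_nonempty {α : Type*} [Finite α] [Nonempty α] (f : α → α) :
    (periodicPts f).Nonempty := by
  obtain ⟨x⟩ := ‹Nonempty α›
  obtain ⟨m, n, hne, heq⟩ := Finite.exists_ne_map_eq_of_infinite (f^[·] x)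
  wlog hlt : m < n generalizing m n
  · exact this n m hne.symm heq.symm (by omega)
  refine ⟨f^[m] x, mk_mem_periodicPts (n := n - m) (by omega) ?_⟩
  rw [IsPeriodicPt, IsFixedPt, ← iterate_add_apply, Nat.sub_add_cancel hlt.le]
  exact heq.symm

theorem Function.exists_injective_cycle_of_forall_apply_ne {α : Type*} [Finite α] [Nonempty α]
    (f : α → α) (hf : ∀ x, f x ≠ x) :
    ∃ (m : ℕ) (c : Fin m → α), 2 ≤ m ∧ Injective c ∧ ∀ k, c (finRotate m k) = f (c k) := by
  obtain ⟨x, hx⟩ := periodicPts_nonempty f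
  have hpos := minimalPeriod_pos_of_mem_periodicPts hx
  have hne_one : minimalPeriod f x ≠ 1 := fun h => hf x (minimalPeriod_eq_one_iff_isFixedPt.mp h)
  refine ⟨minimalPeriod f x, fun k => f^[k] x, by omega, fun k l hkl => ?_, fun k => ?_⟩
  · exact Fin.ext (iterate_injOn_Iio_minimalPeriod k.isLt l.isLt hkl)
  · have : NeZero (minimalPeriod f x) := ⟨hpos.ne'⟩
    beta_reduce
    rw [finRotate_apply, Fin.val_add, Fin.val_one', Nat.add_mod_mod,
      (isPeriodicPt_minimalPeriod f x).iterate_mod_apply, iterate_succ_apply']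

theorem exists_injective_cycle_of_rel {α : Type*} [Finite α] (E : α → α → Prop)
    (hirr : ∀ a, ¬E a a) (hstep : ∀ a b, E a b → ∃ c, E b c) {a b : α} (hab : E a b) :
    ∃ (m : ℕ) (c : Fin m → α), 2 ≤ m ∧ Injective c ∧ ∀ k, E (c k) (c (finRotate m k)) := by
  let S := {x : α // ∃ y, E x y}
  have : Nonempty S := ⟨⟨a, b, hab⟩⟩
  let next : S → S := fun x => ⟨x.2.choose, hstep _ _ x.2.choose_spec⟩
  have hnext : ∀ x : S, E x (next x) := fun x => x.2.choose_spec
  obtain ⟨m, c, hm, hc, hrot⟩ :=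
    exists_injective_cycle_of_forall_apply_ne next fun x h => hirr x (by simpa [h] using hnext x)
  exact ⟨m, Subtype.val ∘ c, hm, Subtype.val_injective.comp hc,
    fun k => by simp only [Function.comp_apply, hrot]; exact hnext (c k)⟩

section CycleLaplacian

variable {q m : ℕ} (c : Fin m → Fin q)

theorem cycleLap_mulVec_one : cycleLap c *ᵥ 1 = 0 := by
  simp [cycleLap, Matrix.sum_mulVec, Matrix.sub_mulVec, single_mulVec_eq]

theorem cycleLap_transpose_mulVec_one : (cycleLap c)ᵀ *ᵥ 1 = 0 := by
  simp only [cycleLap, transpose_sum, transpose_sub, transpose_single, Matrix.sum_mulVec,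
    Matrix.sub_mulVec, single_mulVec_eq, Pi.one_apply, mul_one, one_smul, sum_sub_distrib]
  exact sub_eq_zero.mpr (Equiv.sum_comp (finRotate m) fun k => (Pi.single (c k) 1 : Fin q → ℝ))

variable {c}

theorem Function.Injective.apply_finRotate_ne (hc : Injective c) (hm : 2 ≤ m) (k : Fin m) :
    c (finRotate m k) ≠ c k := fun h =>
  Equiv.Perm.mem_support.mp (by simp [support_finRotate_of_le hm]) (hc h)

theorem neg_diag_cycleLap (hm : 2 ≤ m) (hc : Injective c) :
    -diag (cycleLap c) = ∑ k, Pi.single (c k) 1 := by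
  simp [-finRotate_apply, cycleLap, diag_sum, diag_sub,
    diag_single_of_ne _ _ _ (hc.apply_finRotate_ne hm _).symm]

theorem cycleLap_apply_edge (hm : 2 ≤ m) (hc : Injective c) (k : Fin m) :
    cycleLap c (c k) (c (finRotate m k)) = 1 := by
  rw [cycleLap, Matrix.sum_apply, Finset.sum_eq_single k]
  · simp [-finRotate_apply, single_apply_of_col_ne _ _ (hc.apply_finRotate_ne hm k).symm]
  · intro l _ hlk
    simp [single_apply_of_row_ne (hc.ne hlk)]
  · simp

theorem cycleLap_apply_of_not_edge {a b : Fin q} (hab : a ≠ b)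
    (h : ∀ k, c k = a → c (finRotate m k) ≠ b) : cycleLap c a b = 0 := by
  rw [cycleLap, Matrix.sum_apply]
  refine sum_eq_zero fun k _ => ?_
  rw [Matrix.sub_apply, single_apply_of_ne _ _ _ _ _ fun hk => h k hk.1 hk.2,
    single_apply_of_ne _ _ _ _ _ fun hk => hab (hk.1.symm.trans hk.2), sub_zero]

theorem cycleLap_apply_of_ne (hm : 2 ≤ m) (hc : Injective c) {a b : Fin q} (hab : a ≠ b) :
    cycleLap c a b = if ∃ k, c k = a ∧ c (finRotate m k) = b then 1 else 0 := by
  split_ifs with h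
  · obtain ⟨k, rfl, rfl⟩ := h
    exact cycleLap_apply_edge hm hc k
  · exact cycleLap_apply_of_not_edge hab fun k hk hk' => h ⟨k, hk, hk'⟩

end CycleLaplacian

def cycleLaplacians (q : ℕ) : Set (Matrix (Fin q) (Fin q) ℝ) :=
  {L | ∃ (m : ℕ) (c : Fin m → Fin q), 2 ≤ m ∧ Injective c ∧ cycleLap c = L}

theorem exists_sum_eq_of_mem_hull_cycleLaplacians {q : ℕ} {A : Matrix (Fin q) (Fin q) ℝ}
    (hA : A ∈ PointedCone.hull ℝ (cycleLaplacians q)) :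
    ∃ (n : ℕ) (coef : Fin n → ℝ) (m : Fin n → ℕ) (c : (t : Fin n) → Fin (m t) → Fin q),
      (∀ t, 2 ≤ m t) ∧ (∀ t, Injective (c t)) ∧ (∀ t, 0 ≤ coef t) ∧
      A = ∑ t, coef t • cycleLap (c t) := by
  obtain ⟨n, coef, L, hsum⟩ := Submodule.mem_span_set'.mp hA
  choose m c hm hc hL using fun t => (L t).2
  refine ⟨n, fun t => coef t, m, c, hm, hc, fun t => (coef t).2, ?_⟩
  rw [← hsum]
  -- the cone's scalars `{r : ℝ // 0 ≤ r}` act through their coercion to `ℝ`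
  exact Finset.sum_congr rfl fun t _ => by rw [hL]; rfl

def IsInfinitesimallyDoublyStochastic {q : ℕ} (A : Matrix (Fin q) (Fin q) ℝ) : Prop :=
  (∀ i j, i ≠ j → 0 ≤ A i j) ∧ A *ᵥ 1 = 0 ∧ Aᵀ *ᵥ 1 = 0

noncomputable def offDiagSupport {q : ℕ} (A : Matrix (Fin q) (Fin q) ℝ) :
    Finset (Fin q × Fin q) :=
  {p | p.1 ≠ p.2 ∧ A p.1 p.2 ≠ 0}

theorem offDiagSupport_sub_smul_cycleLap_ssubset {q m : ℕ} {A : Matrix (Fin q) (Fin q) ℝ}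
    {c : Fin m → Fin q} (hm : 2 ≤ m) (hc : Injective c)
    (hpos : ∀ k, 0 < A (c k) (c (finRotate m k))) (k₀ : Fin m) :
    offDiagSupport (A - A (c k₀) (c (finRotate m k₀)) • cycleLap c) ⊂ offDiagSupport A := by
  refine (ssubset_iff_of_subset fun p hp => ?_).mpr
    ⟨(c k₀, c (finRotate m k₀)), ?_, ?_⟩
  · simp only [offDiagSupport, mem_filter, mem_univ, true_and] at hp ⊢
    refine ⟨hp.1, fun h0 => hp.2 ?_⟩
    have hnot : ¬∃ k, c k = p.1 ∧ c (finRotate m k) = p.2 := by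
      rintro ⟨k, hk, hk'⟩
      exact (hpos k).ne' (hk ▸ hk' ▸ h0)
    rw [Matrix.sub_apply, Matrix.smul_apply, cycleLap_apply_of_ne hm hc hp.1, if_neg hnot,
      h0, smul_zero, sub_zero]
  · simpa [-finRotate_apply, offDiagSupport] using
      ⟨(hc.apply_finRotate_ne hm k₀).symm, (hpos k₀).ne'⟩
  · simp only [offDiagSupport, mem_filter, mem_univ, true_and]
    rw [Matrix.sub_apply, Matrix.smul_apply, cycleLap_apply_edge hm hc, smul_eq_mul, mul_one,
      sub_self]
    exact fun h => h.2 rfl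

namespace IsInfinitesimallyDoublyStochastic

variable {q : ℕ} {A : Matrix (Fin q) (Fin q) ℝ}

theorem row_sum (hA : IsInfinitesimallyDoublyStochastic A) (i : Fin q) : ∑ j, A i j = 0 := by
  simpa [mulVec, dotProduct] using congrFun hA.2.1 i

theorem col_sum (hA : IsInfinitesimallyDoublyStochastic A) (j : Fin q) : ∑ i, A i j = 0 := by
  simpa [mulVec, dotProduct] using congrFun hA.2.2 j

theorem diag_neg_of_pos (hA : IsInfinitesimallyDoublyStochastic A) {i j : Fin q} (hij : i ≠ j)
    (h : 0 < A i j) : A j j < 0 := by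
  have hsplit := add_sum_erase univ (fun i => A i j) (mem_univ j)
  have hle : A i j ≤ ∑ i ∈ univ.erase j, A i j :=
    single_le_sum (fun i hi => hA.1 i j (ne_of_mem_erase hi)) (mem_erase.mpr ⟨hij, mem_univ i⟩)
  linarith [hA.col_sum j]

theorem exists_pos_of_diag_neg (hA : IsInfinitesimallyDoublyStochastic A) {j : Fin q}
    (h : A j j < 0) : ∃ k, j ≠ k ∧ 0 < A j k := by
  by_contra! hnonpos
  have hsplit := add_sum_erase univ (A j) (mem_univ j)
  have hle : ∑ k ∈ univ.erase j, A j k ≤ 0 :=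
    sum_nonpos fun k hk => hnonpos k (ne_of_mem_erase hk).symm
  linarith [hA.row_sum j]

theorem exists_cycle (hA : IsInfinitesimallyDoublyStochastic A) {i j : Fin q} (hij : i ≠ j)
    (h : 0 < A i j) :
    ∃ (m : ℕ) (c : Fin m → Fin q), 2 ≤ m ∧ Injective c ∧
      ∀ k, 0 < A (c k) (c (finRotate m k)) := by
  obtain ⟨m, c, hm, hc, hE⟩ := exists_injective_cycle_of_rel (fun a b => a ≠ b ∧ 0 < A a b)
    (fun a h => h.1 rfl) (fun a b h => hA.exists_pos_of_diag_neg (hA.diag_neg_of_pos h.1 h.2))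
    ⟨hij, h⟩
  exact ⟨m, c, hm, hc, fun k => (hE k).2⟩

theorem sub_smul_cycleLap (hA : IsInfinitesimallyDoublyStochastic A) {m : ℕ}
    {c : Fin m → Fin q} (hm : 2 ≤ m) (hc : Injective c) {ε : ℝ}
    (hε : ∀ k, ε ≤ A (c k) (c (finRotate m k))) :
    IsInfinitesimallyDoublyStochastic (A - ε • cycleLap c) := by
  refine ⟨fun a b hab => ?_, ?_, ?_⟩
  · rw [Matrix.sub_apply, Matrix.smul_apply, cycleLap_apply_of_ne hm hc hab, smul_eq_mul]
    split_ifs with h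
    · obtain ⟨k, rfl, rfl⟩ := h
      linarith [hε k]
    · simpa using hA.1 a b hab
  · rw [sub_mulVec, smul_mulVec, cycleLap_mulVec_one, hA.2.1, smul_zero, sub_zero]
  · rw [transpose_sub, transpose_smul, sub_mulVec, smul_mulVec,
      cycleLap_transpose_mulVec_one, hA.2.2, smul_zero, sub_zero]

theorem eq_zero_of_offDiagSupport_eq_empty (hA : IsInfinitesimallyDoublyStochastic A)
    (h : offDiagSupport A = ∅) : A = 0 := by
  have hoff : ∀ i j, i ≠ j → A i j = 0 := fun i j hij => by
    by_contra hne
    have hmem : (i, j) ∈ offDiagSupport A := by simp [offDiagSupport, hij, hne]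
    simp [h] at hmem
  ext i j
  rcases eq_or_ne i j with rfl | hij
  · simpa [sum_eq_single i fun k _ hk => hoff i k hk.symm] using hA.row_sum i
  · exact hoff i j hij

theorem mem_hull_cycleLaplacians (hA : IsInfinitesimallyDoublyStochastic A) :
    A ∈ PointedCone.hull ℝ (cycleLaplacians q) := by
  induction hN : (offDiagSupport A).card using Nat.strong_induction_on generalizing A with
  | _ N ih =>
  obtain hempty | ⟨⟨i, j⟩, hij⟩ := (offDiagSupport A).eq_empty_or_nonempty
  · rw [hA.eq_zero_of_offDiagSupport_eq_empty hempty]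
    exact zero_mem _
  simp only [offDiagSupport, mem_filter, mem_univ, true_and] at hij
  obtain ⟨m, c, hm, hc, hpos⟩ := hA.exists_cycle hij.1 ((hA.1 i j hij.1).lt_of_ne' hij.2)
  obtain ⟨k₀, -, hk₀⟩ := exists_min_image univ (fun k => A (c k) (c (finRotate m k)))
    ⟨⟨0, by omega⟩, mem_univ _⟩
  set ε := A (c k₀) (c (finRotate m k₀))
  have hrest : A - ε • cycleLap c ∈ PointedCone.hull ℝ (cycleLaplacians q) :=
    ih _ (hN ▸ card_lt_card (offDiagSupport_sub_smul_cycleLap_ssubset hm hc hpos k₀))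
      (hA.sub_smul_cycleLap hm hc fun k => hk₀ k (mem_univ k)) rfl
  have hcycle : ε • cycleLap c ∈ PointedCone.hull ℝ (cycleLaplacians q) :=
    Submodule.smul_mem _ (⟨ε, (hpos k₀).le⟩ : {r : ℝ // 0 ≤ r})
      (PointedCone.subset_hull ⟨m, c, hm, hc, rfl⟩)
  simpa using add_mem hrest hcycle

end IsInfinitesimallyDoublyStochastic

/-- for any directed cycle `C` on `m ≥ 2` distinct indices,
`−diag(L_C) = Σ_k e_{i_k}`; and every infinitesimally doubly stochastic matrix
(nonnegative off-diagonal entries, zero row sums and zero column sums) is a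
nonnegative combination of cycle Laplacians `L_C`. -/
theorem infinitesimal_birkhoff {q : ℕ} :
    (∀ (m : ℕ), 2 ≤ m → ∀ c : Fin m → Fin q, Function.Injective c →
      -Matrix.diag (cycleLap c) = ∑ k : Fin m, Pi.single (c k) (1 : ℝ)) ∧
    (∀ A : Matrix (Fin q) (Fin q) ℝ,
      (∀ i j, i ≠ j → 0 ≤ A i j) → A *ᵥ (fun _ => 1) = 0 → Aᵀ *ᵥ (fun _ => 1) = 0 →
      ∃ (n : ℕ) (coef : Fin n → ℝ) (m : Fin n → ℕ)
          (c : (t : Fin n) → Fin (m t) → Fin q),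
        (∀ t, 2 ≤ m t) ∧ (∀ t, Function.Injective (c t)) ∧ (∀ t, 0 ≤ coef t) ∧
        A = ∑ t, coef t • cycleLap (c t)) :=
  ⟨fun _ hm _ hc => neg_diag_cycleLap hm hc, fun _ hoff hrow hcol =>
    exists_sum_eq_of_mem_hull_cycleLaplacians
      (IsInfinitesimallyDoublyStochastic.mem_hull_cycleLaplacians ⟨hoff, hrow, hcol⟩)⟩
end
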